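/- Let p be a prime. A vector v ∈ ℤ[1/p]² is primitive over ℤ[1/p] and satisfies ‖v‖_p = 1 (viewing v in ℚ_p²) if and only if v is a primitive integer vector, i.e. v ∈ ℤ² with gcd(v₁, v₂) = 1. In particular ℤ²_prim = ℤ[1/p]²_prim ∩ S¹_p. -/

import Mathlib

/-! After clearing denominators, a relation `a x + b y = 1` over `ℤ[1/p]` between integers `a, b`
becomes `a s + b t = p ^ k` over `ℤ`, so `gcd(a, b)` is a power of `p`; it is `1` exactly when `p`
does not divide both `a` and `b`, which for integers means `max(|a|_p, |b|_p) = 1`. That `v` has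
integer coordinates in the first place comes from the other half of the norm condition: an element
`m / p ^ n` of `ℤ[1/p]` with `|m / p ^ n|_p ≤ 1` has `p ^ n ∣ m`. -/

/-- A rational number lies in `ℤ[1/p]`, i.e. has the form `m / p^n` with `m ∈ ℤ`, `n ∈ ℕ`. -/
def InZInvP (p : ℕ) (q : ℚ) : Prop := ∃ (m : ℤ) (n : ℕ), q = (m : ℚ) / (p : ℚ) ^ n

/-- A vector `v ∈ ℤ[1/p]²` is primitive over `ℤ[1/p]`: the gcd equation
`v₁·x + v₂·y = 1` has a solution with `x, y ∈ ℤ[1/p]`. -/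
def IsPrimitiveZInvP (p : ℕ) (v : ℚ × ℚ) : Prop :=
  ∃ x y : ℚ, InZInvP p x ∧ InZInvP p y ∧ v.1 * x + v.2 * y = 1

theorem IsCoprime.of_mul_add_mul_eq_pow_of_not_dvd {R : Type*} [CommRing R] [IsBezout R]
    {p a b s t : R} {k : ℕ} (hp : Irreducible p) (h : a * s + b * t = p ^ k) (ha : ¬p ∣ a) :
    IsCoprime a b := by
  have hcop : IsCoprime a (b * t + a * s) := by
    rw [add_comm, h]
    exact hp.coprime_pow_of_not_dvd k ha
  exact hcop.of_add_mul_left_right.of_mul_right_left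

theorem IsCoprime.of_mul_add_mul_eq_pow {R : Type*} [CommRing R] [IsBezout R]
    {p a b s t : R} {k : ℕ} (hp : Irreducible p) (h : a * s + b * t = p ^ k)
    (hab : ¬(p ∣ a ∧ p ∣ b)) : IsCoprime a b := by
  rcases not_and_or.1 hab with ha | hb
  · exact of_mul_add_mul_eq_pow_of_not_dvd hp h ha
  · exact (of_mul_add_mul_eq_pow_of_not_dvd hp (by rw [add_comm, h]) hb).symm

theorem Padic.max_norm_intCast_eq_one_iff {p : ℕ} [Fact p.Prime] (a b : ℤ) :
    max ‖(a : ℚ_[p])‖ ‖(b : ℚ_[p])‖ = 1 ↔ ¬((p : ℤ) ∣ a ∧ (p : ℤ) ∣ b) := by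
  have hle : max ‖(a : ℚ_[p])‖ ‖(b : ℚ_[p])‖ ≤ 1 := max_le (norm_int_le_one a) (norm_int_le_one b)
  rw [← norm_intCast_lt_one_iff, ← norm_intCast_lt_one_iff, ← max_lt_iff, hle.lt_iff_ne, not_not]

theorem InZInvP.intCast (p : ℕ) (a : ℤ) : InZInvP p a :=
  ⟨a, 0, by simp⟩

theorem InZInvP.exists_eq_intCast_of_norm_le_one {p : ℕ} [hp : Fact p.Prime] {q : ℚ}
    (hq : InZInvP p q) (hnorm : ‖(q : ℚ_[p])‖ ≤ 1) : ∃ a : ℤ, q = a := by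
  obtain ⟨m, n, rfl⟩ := hq
  have hpow : (p : ℚ_[p]) ^ n ≠ 0 := pow_ne_zero n (mod_cast hp.out.ne_zero)
  have hdvd : (p : ℤ) ^ n ∣ m := by
    rw [← Padic.norm_int_le_pow_iff_dvd]
    calc ‖(m : ℚ_[p])‖ = ‖(((m : ℚ) / (p : ℚ) ^ n : ℚ) : ℚ_[p])‖ * ‖(p : ℚ_[p]) ^ n‖ := by
          rw [← norm_mul]; push_cast; rw [div_mul_cancel₀ _ hpow]
      _ ≤ ‖(p : ℚ_[p]) ^ n‖ := mul_le_of_le_one_left (norm_nonneg _) hnorm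
      _ = (p : ℝ) ^ (-n : ℤ) := Padic.norm_p_pow n
  obtain ⟨a, rfl⟩ := hdvd
  exact ⟨a, by push_cast; field_simp [hp.out.ne_zero]⟩

theorem IsPrimitiveZInvP.exists_mul_add_mul_eq_pow {p : ℕ} (hp : p ≠ 0) {a b : ℤ}
    (h : IsPrimitiveZInvP p ((a : ℚ), (b : ℚ))) :
    ∃ (s t : ℤ) (k : ℕ), a * s + b * t = (p : ℤ) ^ k := by
  obtain ⟨_, _, ⟨s, k, rfl⟩, ⟨t, l, rfl⟩, hst⟩ := h
  refine ⟨s * p ^ l, t * p ^ k, k + l, ?_⟩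
  have hp0 : (p : ℚ) ≠ 0 := by exact_mod_cast hp
  field_simp at hst
  exact_mod_cast (by rw [pow_add]; linear_combination hst :
    (a : ℚ) * (s * p ^ l) + b * (t * p ^ k) = (p : ℚ) ^ (k + l))

theorem IsCoprime.isPrimitiveZInvP (p : ℕ) {a b : ℤ} (hab : IsCoprime a b) :
    IsPrimitiveZInvP p ((a : ℚ), (b : ℚ)) := by
  obtain ⟨u, w, huw⟩ := hab
  refine ⟨u, w, .intCast p u, .intCast p w, ?_⟩
  dsimp only
  exact_mod_cast (by linear_combination huw : a * u + b * w = 1)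

/-- **`ℤ²_prim = ℤ[1/p]²_prim ∩ S¹_p`:** a vector `v ∈ ℤ[1/p]²` is primitive over
`ℤ[1/p]` and has `p`-adic norm `‖v‖_p = max(|v₁|_p, |v₂|_p) = 1` iff `v` is a primitive
integer vector, i.e. `v ∈ ℤ²` with coprime coordinates. -/
theorem primitive_ZinvP_on_padic_circle_iff_primitive_int
    (p : ℕ) [Fact p.Prime] (v : ℚ × ℚ) (hv : InZInvP p v.1 ∧ InZInvP p v.2) :
    (IsPrimitiveZInvP p v ∧ max ‖(v.1 : ℚ_[p])‖ ‖(v.2 : ℚ_[p])‖ = 1) ↔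
      ∃ a b : ℤ, v.1 = (a : ℚ) ∧ v.2 = (b : ℚ) ∧ IsCoprime a b := by
  have hp : p.Prime := Fact.out
  have hpZ : Prime (p : ℤ) := Nat.prime_iff_prime_int.mp hp
  obtain ⟨x, y⟩ := v
  constructor
  · rintro ⟨hprim, hnorm⟩
    obtain ⟨a, rfl⟩ := hv.1.exists_eq_intCast_of_norm_le_one (hnorm ▸ le_max_left _ _)
    obtain ⟨b, rfl⟩ := hv.2.exists_eq_intCast_of_norm_le_one (hnorm ▸ le_max_right _ _)
    obtain ⟨s, t, k, hst⟩ := hprim.exists_mul_add_mul_eq_pow hp.ne_zero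
    rw [Rat.cast_intCast, Rat.cast_intCast, Padic.max_norm_intCast_eq_one_iff] at hnorm
    exact ⟨a, b, rfl, rfl, .of_mul_add_mul_eq_pow hpZ.irreducible hst hnorm⟩
  · rintro ⟨a, b, rfl, rfl, hab⟩
    refine ⟨hab.isPrimitiveZInvP p, ?_⟩
    rw [Rat.cast_intCast, Rat.cast_intCast, Padic.max_norm_intCast_eq_one_iff]
    exact fun ⟨ha, hb⟩ => hpZ.not_isUnit (hab.isUnit_of_dvd' ha hb)
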